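/- The Sylvester map Φ(w₁,...,wₙ) = (x·w₁) ∗ ... ∗ (x·wₙ) satisfies Φ(ṽ₁,...,ṽₙ) = Φ(w₁,...,wₙ) if and only if there is a permutation σ ∈ Sₙ and real numbers c₁,...,cₙ with c₁⋯cₙ = 1 such that ṽ_k = c_k w_{σ(k)} for each k. -/

import Mathlib

open MvPolynomial

/-- The quadratic form `q(x,y,z) = x² + y² + z²`. -/
noncomputable def qForm : MvPolynomial (Fin 3) ℝ := ∑ i : Fin 3, X i ^ 2

/-- The Laplacian of a polynomial on `ℝ³`. -/
noncomputable def lap (p : MvPolynomial (Fin 3) ℝ) : MvPolynomial (Fin 3) ℝ :=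
  ∑ i : Fin 3, pderiv i (pderiv i p)

/-- A polynomial is harmonic if its Laplacian vanishes. -/
def Harmonic (p : MvPolynomial (Fin 3) ℝ) : Prop := lap p = 0

/-- `star` is a harmonic product: on harmonic polynomials, `star h₁ h₂` is the harmonic
projection `(h₁h₂)₀` of the ordinary product. -/
def IsHarmonicProduct (star : MvPolynomial (Fin 3) ℝ → MvPolynomial (Fin 3) ℝ →
    MvPolynomial (Fin 3) ℝ) : Prop :=
  ∀ h₁ h₂, Harmonic h₁ → Harmonic h₂ →
    Harmonic (star h₁ h₂) ∧ ∃ g, h₁ * h₂ - star h₁ h₂ = qForm * g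

/-- The linear form `x ↦ w · x` as a degree 1 polynomial. -/
noncomputable def linForm (w : Fin 3 → ℝ) : MvPolynomial (Fin 3) ℝ :=
  ∑ i : Fin 3, C (w i) * X i

/-! Modulo `qForm`, a harmonic product of linear forms is their ordinary product, and a harmonic
polynomial divisible by `qForm` vanishes (apply `Δ` repeatedly to `Δ(q g) = 6 g + 4 E g + q Δg`,
where `E` is the Euler operator). So `Φ(ṽ) = Φ(w)` iff `∏ (x·ṽᵢ) ≡ ∏ (x·wᵢ) mod q`. Restricting
to the null cone of `q`, parametrized by `t ↦ (t² - 1, i(t² + 1), 2t)`, kills `q` and sends `x·u`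
to a quadratic in `ℂ[t]` each of whose roots determines the line `ℝu`. Unique factorization in
`ℂ[t]` then matches the lines `ℝwᵢ` and `ℝṽᵢ` up to a permutation, and comparing scalars gives
`∏ cᵢ = 1`. -/

open scoped Polynomial

theorem exists_perm_of_map_univ_eq {α β : Type*} [Fintype α] {f g : α → β}
    (h : Finset.univ.val.map f = Finset.univ.val.map g) :
    ∃ σ : Equiv.Perm α, ∀ a, g (σ a) = f a := by
  classical
  have hcard : ∀ b, Fintype.card {a // f a = b} = Fintype.card {a // g a = b} := fun b => by
    simpa [Multiset.count_map, Fintype.card_subtype, Finset.card, eq_comm] using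
      congrArg (Multiset.count b) h
  exact ⟨Equiv.ofFiberEquiv fun b => Fintype.equivOfCardEq (hcard b), Equiv.ofFiberEquiv_map _⟩

section Euler

variable {σ R : Type*} [Fintype σ] [CommSemiring R]

noncomputable def eulerOp : MvPolynomial σ R →ₗ[R] MvPolynomial σ R :=
  ∑ i, LinearMap.mulLeft R (X i) ∘ₗ (pderiv i).toLinearMap

theorem eulerOp_apply (p : MvPolynomial σ R) : eulerOp p = ∑ i, X i * pderiv i p := by
  simp [eulerOp]

theorem coeff_eulerOp (m : σ →₀ ℕ) (p : MvPolynomial σ R) :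
    coeff m (eulerOp p) = m.degree * coeff m p := by
  classical
  rw [eulerOp_apply, coeff_sum, Finsupp.degree_eq_sum, Nat.cast_sum, Finset.sum_mul]
  refine Finset.sum_congr rfl fun i _ => ?_
  rw [coeff_X_mul', coeff_pderiv]
  split_ifs with hi
  · rw [Finsupp.mem_support_iff] at hi
    rw [Finsupp.sub_add_single_one_cancel hi, Finsupp.tsub_apply, Finsupp.single_eq_same,
      ← Nat.cast_add_one, Nat.sub_add_cancel (Nat.one_le_iff_ne_zero.2 hi), mul_comm]
  · rw [Finsupp.notMem_support_iff.1 hi, Nat.cast_zero, zero_mul]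

theorem pderiv_eulerOp (i : σ) (p : MvPolynomial σ R) :
    pderiv i (eulerOp p) = pderiv i p + eulerOp (pderiv i p) := by
  ext m
  simp only [coeff_add, coeff_pderiv, coeff_eulerOp, map_add, Finsupp.degree_single]
  push_cast
  ring

end Euler

theorem lap_add (p q : MvPolynomial (Fin 3) ℝ) : lap (p + q) = lap p + lap q := by
  simp only [lap, map_add, Finset.sum_add_distrib]

theorem lap_sub (p q : MvPolynomial (Fin 3) ℝ) : lap (p - q) = lap p - lap q := by
  simp only [lap, map_sub, Finset.sum_sub_distrib]

theorem lap_smul (a : ℝ) (p : MvPolynomial (Fin 3) ℝ) : lap (a • p) = a • lap p := by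
  simp only [lap, Derivation.map_smul, Finset.smul_sum]

theorem lap_eulerOp (p : MvPolynomial (Fin 3) ℝ) :
    lap (eulerOp p) = (2 : ℝ) • lap p + eulerOp (lap p) := by
  simp only [lap, pderiv_eulerOp, map_add, map_sum]
  rw [Finset.smul_sum, ← Finset.sum_add_distrib]
  refine Finset.sum_congr rfl fun i _ => ?_
  rw [two_smul, add_assoc]

theorem totalDegree_lap_lt {p : MvPolynomial (Fin 3) ℝ} (h : lap p ≠ 0) :
    (lap p).totalDegree < p.totalDegree := by
  obtain ⟨m, hm, hdeg⟩ := Finset.exists_mem_eq_sup _ (support_nonempty.2 h) Finsupp.degree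
  rw [mem_support_iff, lap, coeff_sum] at hm
  obtain ⟨i, -, hi⟩ := Finset.exists_ne_zero_of_sum_ne_zero hm
  simp only [coeff_pderiv] at hi
  have hle : ((m + Finsupp.single i 1) + Finsupp.single i 1).degree ≤ p.totalDegree :=
    le_totalDegree (mem_support_iff.2 (left_ne_zero_of_mul (left_ne_zero_of_mul hi)))
  have htot : (lap p).totalDegree = m.degree := hdeg
  simp only [map_add, Finsupp.degree_single] at hle
  omega

theorem pderiv_qForm (i : Fin 3) : pderiv i qForm = 2 * X i := by
  fin_cases i <;> simp [qForm, Fin.sum_univ_three, pderiv_X]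

theorem lap_qForm_mul (g : MvPolynomial (Fin 3) ℝ) :
    lap (qForm * g) = (6 : ℝ) • g + (4 : ℝ) • eulerOp g + qForm * lap g := by
  have h2 : ∀ i : Fin 3, pderiv i (2 * X i : MvPolynomial (Fin 3) ℝ) = 2 := fun i => by
    rw [← map_ofNat C 2, pderiv_C_mul, pderiv_X_self, mul_one, map_ofNat]
  simp only [lap, eulerOp_apply, pderiv_mul, map_add, pderiv_qForm, h2, smul_eq_C_mul, map_ofNat,
    Fin.sum_univ_three]
  ring

theorem eq_zero_of_smul_add_smul_eulerOp_add_qForm_mul_lap_eq_zero {g : MvPolynomial (Fin 3) ℝ}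
    {a b : ℝ} (ha : 0 < a) (hb : 0 < b)
    (h : a • g + b • eulerOp g + qForm * lap g = 0) : g = 0 := by
  induction hN : g.totalDegree using Nat.strong_induction_on generalizing g a b with
  | _ N ih =>
  have hlap : lap g = 0 := by
    -- `Δ` turns the equation into one of the same shape for `Δ g`, which has smaller degree.
    by_contra hne
    refine hne (ih _ (hN ▸ totalDegree_lap_lt hne) (a := a + 2 * b + 6) (b := b + 4)
      (by positivity) (by positivity) ?_ rfl)
    have hΔ := congrArg lap h
    rw [lap_add, lap_add, lap_smul, lap_smul, lap_eulerOp, lap_qForm_mul,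
      show lap 0 = 0 by simp [lap]] at hΔ
    linear_combination (norm := module) hΔ
  rw [hlap, mul_zero, add_zero] at h
  ext m
  have hm := congrArg (coeff m) h
  simp only [coeff_add, coeff_smul, coeff_eulerOp, coeff_zero, smul_eq_mul] at hm
  have hpos : 0 < a + b * m.degree := by positivity
  simpa [hpos.ne'] using (show (a + b * m.degree) * coeff m g = 0 by linear_combination hm)

theorem Harmonic.eq_of_qForm_dvd_sub {h₁ h₂ : MvPolynomial (Fin 3) ℝ} (hh₁ : Harmonic h₁)
    (hh₂ : Harmonic h₂) (hdvd : qForm ∣ h₁ - h₂) : h₁ = h₂ := by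
  obtain ⟨g, hg⟩ := hdvd
  have hq : lap (qForm * g) = 0 := by rw [← hg, lap_sub, hh₁, hh₂, sub_zero]
  rw [lap_qForm_mul] at hq
  have hg0 : g = 0 :=
    eq_zero_of_smul_add_smul_eulerOp_add_qForm_mul_lap_eq_zero (by norm_num) (by norm_num) hq
  rwa [hg0, mul_zero, sub_eq_zero] at hg

theorem harmonic_one : Harmonic 1 := by
  simp [Harmonic, lap]

theorem harmonic_linForm (w : Fin 3 → ℝ) : Harmonic (linForm w) := by
  simp [Harmonic, lap, linForm, pderiv_X, Pi.single_apply, apply_ite]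

theorem IsHarmonicProduct.harmonic_foldr_and_qForm_dvd
    {star : MvPolynomial (Fin 3) ℝ → MvPolynomial (Fin 3) ℝ → MvPolynomial (Fin 3) ℝ}
    (hstar : IsHarmonicProduct star) {L : List (MvPolynomial (Fin 3) ℝ)}
    (hL : ∀ p ∈ L, Harmonic p) :
    Harmonic (L.foldr star 1) ∧ qForm ∣ L.prod - L.foldr star 1 := by
  induction L with
  | nil => exact ⟨harmonic_one, by simp⟩
  | cons p L ih =>
    obtain ⟨hF, hdvd⟩ := ih fun q hq => hL q (List.mem_cons_of_mem _ hq)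
    obtain ⟨hstarF, hstar_dvd⟩ := hstar p _ (hL p List.mem_cons_self) hF
    refine ⟨hstarF, ?_⟩
    rw [List.foldr_cons, List.prod_cons,
      show ∀ F, p * L.prod - star p F = p * (L.prod - F) + (p * F - star p F) by intro; ring]
    exact dvd_add (hdvd.mul_left p) hstar_dvd

theorem linForm_smul (c : ℝ) (u : Fin 3 → ℝ) : linForm (c • u) = C c * linForm u := by
  simp only [linForm, Pi.smul_apply, smul_eq_mul, Finset.mul_sum, map_mul, mul_assoc]

theorem prod_linForm_eq_of_eq_smul {ι : Type*} [Fintype ι] {w w' : ι → Fin 3 → ℝ}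
    {σ : Equiv.Perm ι} {c : ι → ℝ} (h : ∀ k, w' k = c k • w (σ k)) :
    ∏ i, linForm (w' i) = C (∏ i, c i) * ∏ i, linForm (w i) := by
  rw [Finset.prod_congr rfl fun k _ => by rw [h k, linForm_smul], Finset.prod_mul_distrib,
    map_prod, Equiv.prod_comp σ fun i => linForm (w i)]

noncomputable def nullConeParam : Fin 3 → ℂ[X] :=
  ![Polynomial.X ^ 2 - 1, Polynomial.C Complex.I * (Polynomial.X ^ 2 + 1),
    Polynomial.C 2 * Polynomial.X]

noncomputable def nullConeRestriction : MvPolynomial (Fin 3) ℝ →ₐ[ℝ] ℂ[X] :=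
  aeval nullConeParam

theorem nullConeRestriction_qForm : nullConeRestriction qForm = 0 := by
  simp only [nullConeRestriction, nullConeParam, qForm, Fin.sum_univ_three, map_add, map_pow,
    aeval_X, Matrix.cons_val_zero, Matrix.cons_val_one, Matrix.cons_val]
  rw [mul_pow, ← map_pow, Complex.I_sq, map_neg, map_one, map_ofNat]
  ring

noncomputable def coneQuadratic (u : Fin 3 → ℝ) : ℂ[X] :=
  nullConeRestriction (linForm u)

theorem coneQuadratic_eq (u : Fin 3 → ℝ) :
    coneQuadratic u = Polynomial.C ((u 0 : ℂ) + u 1 * Complex.I) * Polynomial.X ^ 2 +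
      Polynomial.C (2 * u 2 : ℂ) * Polynomial.X + Polynomial.C (-(u 0 : ℂ) + u 1 * Complex.I) := by
  simp only [coneQuadratic, nullConeRestriction, linForm, map_mul, aeval_X, aeval_C,
    Fin.sum_univ_three, nullConeParam, Matrix.cons_val_zero, Matrix.cons_val_one,
    Matrix.cons_val_two, Matrix.head_cons, Matrix.tail_cons, Polynomial.algebraMap_apply,
    Complex.coe_algebraMap, map_add, map_neg, map_ofNat]
  ring

theorem eval_coneQuadratic (u : Fin 3 → ℝ) (z : ℂ) :
    (coneQuadratic u).eval z =
      ((u 0 : ℂ) + u 1 * Complex.I) * z ^ 2 + 2 * u 2 * z + (-(u 0 : ℂ) + u 1 * Complex.I) := by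
  simp [coneQuadratic_eq]

theorem coneQuadratic_smul (c : ℝ) (u : Fin 3 → ℝ) :
    coneQuadratic (c • u) = Polynomial.C (c : ℂ) * coneQuadratic u := by
  rw [coneQuadratic, linForm_smul, map_mul, algHom_C, Polynomial.algebraMap_apply,
    Complex.coe_algebraMap, coneQuadratic]

theorem exists_root_coneQuadratic (u : Fin 3 → ℝ) : ∃ z, (coneQuadratic u).eval z = 0 := by
  by_cases hA : (u 0 : ℂ) + u 1 * Complex.I = 0
  · refine ⟨0, ?_⟩
    simp only [Complex.ext_iff] at hA
    simp_all [eval_coneQuadratic]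
  · rw [coneQuadratic_eq]
    exact IsAlgClosed.exists_root _ (by rw [Polynomial.degree_quadratic hA]; decide)

-- `(1 + |z|²)` times the inverse stereographic projection of `z`, first coordinate negated.
noncomputable def stereoLift (z : ℂ) : Fin 3 → ℝ :=
  ![-2 * z.re, 2 * z.im, z.re ^ 2 + z.im ^ 2 - 1]

theorem stereoLift_ne_zero (z : ℂ) : stereoLift z ≠ 0 := by
  intro h
  have h0 := congrFun h 0
  have h1 := congrFun h 1
  have h2 := congrFun h 2
  simp only [stereoLift, Matrix.cons_val_zero, Matrix.cons_val_one, Matrix.cons_val_two,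
    Matrix.head_cons, Matrix.tail_cons, Pi.zero_apply] at h0 h1 h2
  nlinarith

theorem exists_smul_stereoLift_of_eval_eq_zero {u : Fin 3 → ℝ} {z : ℂ}
    (h : (coneQuadratic u).eval z = 0) : ∃ t : ℝ, t • stereoLift z = u := by
  obtain ⟨x, y⟩ := z
  rw [eval_coneQuadratic] at h
  have hre := congrArg Complex.re h
  have him := congrArg Complex.im h
  simp only [sq, Complex.add_re, Complex.add_im, Complex.mul_re, Complex.mul_im, Complex.neg_re,
    Complex.neg_im, Complex.ofReal_re, Complex.ofReal_im, Complex.I_re, Complex.I_im,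
    Complex.re_ofNat, Complex.im_ofNat, Complex.zero_re, Complex.zero_im] at hre him
  -- `hre`, `him` say `u ⟂ a, b`, where `a + i b = (z² - 1, i(z² + 1), 2z)`. With `n = stereoLift z`
  -- these form an orthogonal basis of `ℝ³` with `|a|² = |b|² = |n|² = (1 + |z|²)²`, so
  -- `(1 + |z|²)² u = (u·a) a + (u·b) b + (u·n) n = (u·n) n`.
  have hpos : (1 + x ^ 2 + y ^ 2) ^ 2 ≠ 0 := by positivity
  set t := (-2 * x * u 0 + 2 * y * u 1 + (x ^ 2 + y ^ 2 - 1) * u 2) / (1 + x ^ 2 + y ^ 2) ^ 2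
  have h0 : t * (-2 * x) = u 0 := by
    rw [div_mul_eq_mul_div, div_eq_iff hpos]
    linear_combination (1 + y ^ 2 - x ^ 2) * hre - 2 * x * y * him
  have h1 : t * (2 * y) = u 1 := by
    rw [div_mul_eq_mul_div, div_eq_iff hpos]
    linear_combination 2 * x * y * hre - (x ^ 2 - y ^ 2 + 1) * him
  have h2 : t * (x ^ 2 + y ^ 2 - 1) = u 2 := by
    rw [div_mul_eq_mul_div, div_eq_iff hpos]
    linear_combination -2 * x * hre - 2 * y * him
  refine ⟨t, funext fun k => ?_⟩
  fin_cases k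
  exacts [h0, h1, h2]

theorem coneQuadratic_ne_zero {u : Fin 3 → ℝ} (hu : u ≠ 0) : coneQuadratic u ≠ 0 := by
  intro h
  have hroot (z : ℂ) : (coneQuadratic u).eval z = 0 := by rw [h, Polynomial.eval_zero]
  obtain ⟨t, ht⟩ := exists_smul_stereoLift_of_eval_eq_zero (hroot 0)
  obtain ⟨s, hs⟩ := exists_smul_stereoLift_of_eval_eq_zero (hroot 1)
  have ht0 : t = 0 := by simpa [stereoLift] using congrFun (ht.trans hs.symm) 2
  exact hu (by rw [← ht, ht0, zero_smul])

theorem mk_eq_mk_stereoLift_of_eval_eq_zero {u : Fin 3 → ℝ} (hu : u ≠ 0) {z : ℂ}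
    (h : (coneQuadratic u).eval z = 0) :
    Projectivization.mk ℝ u hu = Projectivization.mk ℝ (stereoLift z) (stereoLift_ne_zero z) :=
  (Projectivization.mk_eq_mk_iff' ℝ _ _ hu _).2 (exists_smul_stereoLift_of_eval_eq_zero h)

theorem associated_coneQuadratic_of_mk_eq {u v : Fin 3 → ℝ} {hu : u ≠ 0} {hv : v ≠ 0}
    (h : Projectivization.mk ℝ u hu = Projectivization.mk ℝ v hv) :
    Associated (coneQuadratic u) (coneQuadratic v) := by
  obtain ⟨a, rfl⟩ := (Projectivization.mk_eq_mk_iff' ℝ u v hu hv).1 h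
  have ha : (a : ℂ) ≠ 0 := Complex.ofReal_ne_zero.2 (left_ne_zero_of_smul hu)
  rw [coneQuadratic_smul]
  exact associated_unit_mul_left _ _ (Polynomial.isUnit_C.2 ha.isUnit)

theorem map_mk'_eq_of_associated_prod_coneQuadratic {s t : Multiset {u : Fin 3 → ℝ // u ≠ 0}}
    (h : Associated (s.map fun u => coneQuadratic u.1).prod
      (t.map fun u => coneQuadratic u.1).prod) :
    s.map (Projectivization.mk' ℝ) = t.map (Projectivization.mk' ℝ) := by
  induction s using Multiset.induction_on generalizing t with
  | empty =>
    obtain rfl | ⟨b, hb⟩ := Multiset.empty_or_exists_mem t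
    · rfl
    obtain ⟨z, hz⟩ := exists_root_coneQuadratic b
    have hunit : (t.map fun u => coneQuadratic u.1).prod ∣ 1 := by
      simpa using h.symm.dvd
    have hmem : coneQuadratic b.1 ∈ t.map fun u => coneQuadratic u.1 :=
      Multiset.mem_map_of_mem _ hb
    have hdvd : coneQuadratic b.1 ∣ 1 := (Multiset.dvd_prod hmem).trans hunit
    simpa using Polynomial.eval_eq_zero_of_dvd_of_eval_eq_zero hdvd hz
  | cons a s ih =>
    rw [Multiset.map_cons, Multiset.prod_cons] at h
    obtain ⟨z, hz⟩ := exists_root_coneQuadratic a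
    have hzt := Polynomial.eval_eq_zero_of_dvd_of_eval_eq_zero ((dvd_mul_right _ _).trans h.dvd) hz
    rw [Polynomial.eval_multiset_prod, Multiset.prod_eq_zero_iff] at hzt
    obtain ⟨b, hb, hbz⟩ : ∃ b ∈ t, (coneQuadratic b).eval z = 0 := by simpa using hzt
    obtain ⟨t, rfl⟩ := Multiset.exists_cons_of_mem hb
    have hab : Projectivization.mk' ℝ a = Projectivization.mk' ℝ b := by
      simp only [Projectivization.mk'_eq_mk, mk_eq_mk_stereoLift_of_eval_eq_zero a.2 hz,
        mk_eq_mk_stereoLift_of_eval_eq_zero b.2 hbz]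
    rw [Multiset.map_cons, Multiset.prod_cons] at h
    rw [Multiset.map_cons, Multiset.map_cons, hab,
      ih (h.of_mul_left (associated_coneQuadratic_of_mk_eq hab) (coneQuadratic_ne_zero a.2))]

theorem exists_perm_smul_of_prod_coneQuadratic_eq {ι : Type*} [Fintype ι]
    {w w' : ι → Fin 3 → ℝ} (hw : ∀ i, w i ≠ 0) (hw' : ∀ i, w' i ≠ 0)
    (h : ∏ i, coneQuadratic (w' i) = ∏ i, coneQuadratic (w i)) :
    ∃ σ : Equiv.Perm ι, ∃ c : ι → ℝ, ∀ k, w' k = c k • w (σ k) := by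
  have hmap := map_mk'_eq_of_associated_prod_coneQuadratic
    (s := Finset.univ.val.map fun i => ⟨w' i, hw' i⟩)
    (t := Finset.univ.val.map fun i => ⟨w i, hw i⟩)
    (by
      rw [Multiset.map_map, Multiset.map_map, ← Finset.prod_eq_multiset_prod,
        ← Finset.prod_eq_multiset_prod]
      exact .of_eq h)
  rw [Multiset.map_map, Multiset.map_map] at hmap
  obtain ⟨σ, hσ⟩ := exists_perm_of_map_univ_eq hmap
  choose c hc using fun k =>
    (Projectivization.mk_eq_mk_iff' ℝ _ _ (hw' k) (hw (σ k))).1 (hσ k).symm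
  exact ⟨σ, c, fun k => (hc k).symm⟩

theorem nullConeRestriction_eq_of_qForm_dvd_sub {p q : MvPolynomial (Fin 3) ℝ}
    (h : qForm ∣ p - q) : nullConeRestriction p = nullConeRestriction q := by
  obtain ⟨g, hg⟩ := h
  rw [← sub_eq_zero, ← map_sub, hg, map_mul, nullConeRestriction_qForm, zero_mul]

theorem nullConeRestriction_prod_linForm {ι : Type*} (s : Finset ι) (w : ι → Fin 3 → ℝ) :
    nullConeRestriction (∏ i ∈ s, linForm (w i)) = ∏ i ∈ s, coneQuadratic (w i) :=
  map_prod _ _ _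

theorem prod_eq_one_of_prod_coneQuadratic_eq {ι : Type*} [Fintype ι] {w w' : ι → Fin 3 → ℝ}
    {σ : Equiv.Perm ι} {c : ι → ℝ} (hw : ∀ i, w i ≠ 0) (hc : ∀ k, w' k = c k • w (σ k))
    (h : ∏ i, coneQuadratic (w' i) = ∏ i, coneQuadratic (w i)) : ∏ i, c i = 1 := by
  have hprod := congrArg nullConeRestriction (prod_linForm_eq_of_eq_smul hc)
  rwa [map_mul, algHom_C, nullConeRestriction_prod_linForm, nullConeRestriction_prod_linForm, h,
    eq_comm, mul_eq_right₀ (Finset.prod_ne_zero_iff.2 fun i _ => coneQuadratic_ne_zero (hw i)),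
    map_eq_one_iff _ (algebraMap ℝ ℂ[X]).injective] at hprod

/-- **The fibers of the Sylvester map** `Φ(w₁,…,wₙ) = (x·w₁) ∗ ⋯ ∗ (x·wₙ)`:
for nonzero vectors, `Φ(ṽ₁,…,ṽₙ) = Φ(w₁,…,wₙ)` iff there are a permutation `σ` and reals
`c₁,…,cₙ` with `c₁⋯cₙ = 1` such that `ṽ_k = c_k w_{σ(k)}` for all `k`. -/
theorem sylvester_fiber (star : MvPolynomial (Fin 3) ℝ → MvPolynomial (Fin 3) ℝ →
      MvPolynomial (Fin 3) ℝ) (hstar : IsHarmonicProduct star)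
    (n : ℕ) (w w' : Fin n → (Fin 3 → ℝ))
    (hw : ∀ i, w i ≠ 0) (hw' : ∀ i, w' i ≠ 0) :
    (List.ofFn fun i => linForm (w' i)).foldr star 1 =
        (List.ofFn fun i => linForm (w i)).foldr star 1 ↔
      ∃ σ : Equiv.Perm (Fin n), ∃ c : Fin n → ℝ,
        (∏ i : Fin n, c i) = 1 ∧ ∀ k, w' k = c k • w (σ k) := by
  have hlin (v : Fin n → Fin 3 → ℝ) : ∀ p ∈ List.ofFn fun i => linForm (v i), Harmonic p := by
    simp [harmonic_linForm]
  obtain ⟨hH', hdvd'⟩ := hstar.harmonic_foldr_and_qForm_dvd (hlin w')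
  obtain ⟨hH, hdvd⟩ := hstar.harmonic_foldr_and_qForm_dvd (hlin w)
  rw [List.prod_ofFn] at hdvd hdvd'
  constructor
  · intro hfold
    have hΨ : ∏ i, coneQuadratic (w' i) = ∏ i, coneQuadratic (w i) := by
      rw [← nullConeRestriction_prod_linForm, ← nullConeRestriction_prod_linForm]
      exact nullConeRestriction_eq_of_qForm_dvd_sub (by simpa [hfold] using dvd_sub hdvd' hdvd)
    obtain ⟨σ, c, hc⟩ := exists_perm_smul_of_prod_coneQuadratic_eq hw hw' hΨ
    exact ⟨σ, c, prod_eq_one_of_prod_coneQuadratic_eq hw hc hΨ, hc⟩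
  · rintro ⟨σ, c, hc1, hc⟩
    refine Harmonic.eq_of_qForm_dvd_sub hH' hH ?_
    rw [prod_linForm_eq_of_eq_smul hc, hc1, map_one, one_mul] at hdvd'
    simpa using dvd_sub hdvd hdvd'
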